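/- arXiv:1501.00288 — 2 statements merged into one kernel-verified Lean document; each statement's English description precedes it below -/
import Mathlib

section
/- Let (T, Q) be a tree-decomposition of the intersection graph of an instance of problem GB, and suppose (X̂, λ̂) is a feasible solution of LP-GB. Then there exist an integer k ≥ 1, nonnegative reals μ^1, …, μ^k with Σ_{ℓ=1}^k μ^ℓ = 1, and GB-feasible vectors x^1, …, x^k ∈ {0,1}^n such that for every t ∈ V(T) and every (Y, N) ∈ Ω_t, X̂[Y, N] = Σ_{ℓ=1}^k μ^ℓ · Π_{j∈Y} x^ℓ_j · Π_{j∈N} (1 − x^ℓ_j). Consequently, if the instance of GB is feasible, then for every cost vector c ∈ ℝ^n the minimum of Σ_{j=1}^n c_j x_j over GB-feasible x equals the minimum of Σ_{j=1}^n c_j X[{j}, ∅] over feasible solutions (X, λ) of LP-GB, and the latter minimum is attained. -/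
open Finset

/-- The real value of a Boolean (0 or 1). -/
def bval (b : Bool) : ℝ := if b then 1 else 0

/-- Restriction of a 0/1 vector on `Fin n` to the coordinates in `A`. -/
def restr {n : ℕ} (x : Fin n → Bool) (A : Finset (Fin n)) : {j // j ∈ A} → Bool :=
  fun j => x j.val

/-- GB-feasibility: the restriction of `x` to each constraint support `K i` lies in `Sc i`. -/
def GBFeas {n m : ℕ} (K : Fin m → Finset (Fin n))
    (Sc : ∀ i : Fin m, Set ({j // j ∈ K i} → Bool)) (x : Fin n → Bool) : Prop :=
  ∀ i, restr x (K i) ∈ Sc i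

/-- The intersection graph of a GB instance. -/
def interGraph {n m : ℕ} (K : Fin m → Finset (Fin n)) : SimpleGraph (Fin n) where
  Adj j k := j ≠ k ∧ ∃ i, j ∈ K i ∧ k ∈ K i
  symm := by
    constructor
    rintro j k ⟨hne, i, hj, hk⟩
    exact ⟨hne.symm, i, hk, hj⟩
  loopless := by
    constructor
    rintro j ⟨hne, -⟩
    exact hne rfl

/-- Tree-decomposition of a graph `H`: `T` is a finite tree, every vertex of `H` appears in a
set of bags inducing a (nonempty) connected subgraph of `T`, and each edge of `H` is contained
in some bag. -/
def IsTreeDecomp {V τ : Type} (H : SimpleGraph V) (T : SimpleGraph τ) (Q : τ → Finset V) : Prop :=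
  T.IsTree ∧ (∀ v : V, (T.induce {t | v ∈ Q t}).Connected) ∧
    (∀ u v : V, H.Adj u v → ∃ t, u ∈ Q t ∧ v ∈ Q t)

/-- `F t`: 0/1 vectors on `Q t` (canonically extended by `false` off `Q t`), satisfying every
constraint whose support is contained in `Q t`. -/
def Ffeas {n m : ℕ} {τ : Type} (K : Fin m → Finset (Fin n))
    (Sc : ∀ i : Fin m, Set ({j // j ∈ K i} → Bool)) (Q : τ → Finset (Fin n)) (t : τ) :
    Set (Fin n → Bool) :=
  {v | (∀ j, j ∉ Q t → v j = false) ∧ ∀ i, K i ⊆ Q t → restr v (K i) ∈ Sc i}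

/-- `Ω t`: pairs `(Y, N)` of disjoint subsets of `Q t` such that either `|Y| ≤ 1` and `N = ∅`,
or `(Y, N)` is a partition of `Q t ∩ Q t'` for some neighbor `t'` of `t` in `T`. -/
def Omega {n : ℕ} {τ : Type} (T : SimpleGraph τ) (Q : τ → Finset (Fin n)) (t : τ) :
    Set (Finset (Fin n) × Finset (Fin n)) :=
  {YN | Disjoint YN.1 YN.2 ∧ YN.1 ∪ YN.2 ⊆ Q t ∧
    ((YN.1.card ≤ 1 ∧ YN.2 = ∅) ∨ ∃ t', T.Adj t t' ∧ YN.1 ∪ YN.2 = Q t ∩ Q t')}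

/-- Feasibility for the linear system LP-GB (λ-variables are extended by `0` off `F t`). -/
def LPGBFeas {n m : ℕ} {τ : Type} (K : Fin m → Finset (Fin n))
    (Sc : ∀ i : Fin m, Set ({j // j ∈ K i} → Bool))
    (T : SimpleGraph τ) (Q : τ → Finset (Fin n))
    (X : Finset (Fin n) × Finset (Fin n) → ℝ) (lam : τ → (Fin n → Bool) → ℝ) : Prop :=
  (∀ t v, v ∉ Ffeas K Sc Q t → lam t v = 0) ∧
  (∀ t v, 0 ≤ lam t v) ∧
  (∀ t, ∑ v : Fin n → Bool, lam t v = 1) ∧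
  (∀ t, ∀ YN ∈ Omega T Q t,
    X YN = ∑ v : Fin n → Bool,
      lam t v * (∏ j ∈ YN.1, bval (v j)) * (∏ j ∈ YN.2, (1 - bval (v j))))

/-- Feasibility for the linear system LPz (λ-variables are extended by `0` off `F t`). -/
def LPzFeas {n m : ℕ} {τ : Type} (K : Fin m → Finset (Fin n))
    (Sc : ∀ i : Fin m, Set ({j // j ∈ K i} → Bool))
    (T : SimpleGraph τ) (Q : τ → Finset (Fin n))
    (Z : Finset (Fin n) → ℝ) (lam : τ → (Fin n → Bool) → ℝ) : Prop :=
  (∀ t v, v ∉ Ffeas K Sc Q t → lam t v = 0) ∧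
  (∀ t v, 0 ≤ lam t v) ∧
  (∀ t, ∑ v : Fin n → Bool, lam t v = 1) ∧
  (∀ t, ∀ S : Finset (Fin n), S ⊆ Q t →
    Z S = ∑ v ∈ Finset.univ.filter (fun v : Fin n → Bool => ∀ j ∈ S, v j = true), lam t v)

/-!
Read each `λ^t` as a probability distribution on 0/1 vectors. The constraint of LP-GB for
`(Y, N) ∈ Ω_t` says that `X[Y, N]` is the probability of the event `x_Y = 1, x_N = 0`, so
distributions of adjacent bags have the same marginal on the intersection of the bags.

Peel off a leaf `t₀` of the tree, with neighbour `t₁`. By the running intersection property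
`Q t₀ ∩ Q t ⊆ Q t₁` for every other bag `t`, so the distribution obtained inductively for the rest
of the tree can be glued to `λ^{t₀}` by making the coordinates of `Q t₀` conditionally independent
of all others given those in `Q t₀ ∩ Q t₁`. This yields one distribution `μ` whose marginal on
every bag `Q t` is that of `λ^t`.

Each constraint support `K i` is a clique of the intersection graph, hence lies in some bag
`Q t`; a vector charged by `μ` therefore agrees on `K i` with a vector of `F_t` and is
GB-feasible. Enumerating the support of `μ` gives the convex combination. The LP objective is the
`μ`-average of the GB objective, and every GB-feasible vector gives an integral LP solution, so
the two optima agree.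
-/

section Marginal

variable {ι : Type*} [Fintype ι] [DecidableEq ι]

def marginal (q : (ι → Bool) → ℝ) (A : Finset ι) (w : ι → Bool) : ℝ :=
  ∑ v with ∀ j ∈ A, v j = w j, q v

variable {q q' : (ι → Bool) → ℝ} {A B : Finset ι}

theorem marginal_congr {w w' : ι → Bool} (h : ∀ j ∈ A, w j = w' j) :
    marginal q A w = marginal q A w' := by
  unfold marginal
  congr! 2 with v
  exact forall₂_congr fun j hj => by rw [h j hj]

theorem marginal_empty (q : (ι → Bool) → ℝ) (w : ι → Bool) : marginal q ∅ w = ∑ v, q v := by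
  simp [marginal]

theorem le_marginal (hq : ∀ v, 0 ≤ q v) (A : Finset ι) (w : ι → Bool) : q w ≤ marginal q A w :=
  single_le_sum (fun v _ => hq v) (by simp)

theorem marginal_eq_sum_marginal (hAB : A ⊆ B) (q : (ι → Bool) → ℝ) (w : ι → Bool) :
    marginal q A w =
      ∑ c with (∀ j ∈ A, c j = w j) ∧ B.piecewise c w = c, marginal q B c := by
  rw [marginal, ← sum_fiberwise_of_maps_to (g := fun v => B.piecewise v w)]
  · refine sum_congr rfl fun c hc => ?_
    simp only [mem_filter, mem_univ, true_and] at hc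
    refine sum_congr (ext fun v => ?_) fun _ _ => rfl
    simp only [mem_filter, mem_univ, true_and]
    constructor
    · rintro ⟨-, rfl⟩ j hj
      exact (piecewise_eq_of_mem _ _ _ hj).symm
    · intro hv
      refine ⟨fun j hj => (hv j (hAB hj)).trans (hc.1 j hj), ?_⟩
      rw [← hc.2]
      exact B.piecewise_congr (fun j hj => hv j hj) fun _ _ => rfl
  · intro v hv
    simp only [mem_filter, mem_univ, true_and, piecewise_idem_left, and_true] at hv ⊢
    exact fun j hj => (piecewise_eq_of_mem _ _ _ (hAB hj)).trans (hv j hj)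

theorem marginal_eq_of_subset (hAB : A ⊆ B) (h : ∀ w, marginal q B w = marginal q' B w)
    (w : ι → Bool) : marginal q A w = marginal q' A w := by
  simp only [marginal_eq_sum_marginal hAB, h]

theorem prod_bval_mul_prod_one_sub_bval {Y N : Finset ι} (hYN : Disjoint Y N) (v : ι → Bool) :
    (∏ j ∈ Y, bval (v j)) * ∏ j ∈ N, (1 - bval (v j)) =
      if ∀ j ∈ Y ∪ N, v j = decide (j ∈ Y) then 1 else 0 := by
  have one_sub_bval : ∀ b, 1 - bval b = if b = false then 1 else 0 := by
    intro b; cases b <;> norm_num [bval]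
  have hcond : (∀ j ∈ Y ∪ N, v j = decide (j ∈ Y)) ↔
      (∀ j ∈ Y, v j = true) ∧ ∀ j ∈ N, v j = false := by
    simp only [mem_union, or_imp, forall_and]
    refine and_congr (forall₂_congr fun j hj => by simp [hj]) (forall₂_congr fun j hj => ?_)
    simp [disjoint_right.mp hYN hj]
  simp only [one_sub_bval]
  simp only [bval, prod_boole, hcond, ite_zero_mul_ite_zero, one_mul]

theorem sum_mul_prod_bval_eq_marginal (q : (ι → Bool) → ℝ) {Y N : Finset ι} (hYN : Disjoint Y N) :
    ∑ v, q v * (∏ j ∈ Y, bval (v j)) * ∏ j ∈ N, (1 - bval (v j)) =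
      marginal q (Y ∪ N) (fun j => decide (j ∈ Y)) := by
  simp only [mul_assoc, prod_bval_mul_prod_one_sub_bval hYN, mul_ite, mul_one, mul_zero,
    marginal, sum_filter]

end Marginal

section Glue

variable {ι : Type*} [Fintype ι] [DecidableEq ι] {p q : (ι → Bool) → ℝ} {A C : Finset ι}

theorem mul_div_cancel_of_le {a m : ℝ} (ha : 0 ≤ a) (hm : a ≤ m) : a * m / m = a := by
  rcases eq_or_ne m 0 with rfl | hm0
  · simp [le_antisymm hm ha]
  · exact mul_div_cancel_right₀ a hm0

-- Couples `p` and `q` conditionally independently given the coordinates in `A`. Where the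
-- denominator vanishes so does `q z`, and `x / 0 = 0` gives weight `0` there.
noncomputable def couplingWeight (A : Finset ι) (p q : (ι → Bool) → ℝ) (y z : ι → Bool) : ℝ :=
  if ∀ j ∈ A, z j = y j then p y * q z / marginal q A z else 0

noncomputable def glue (A C : Finset ι) (p q : (ι → Bool) → ℝ) (x : ι → Bool) : ℝ :=
  ∑ y, ∑ z with C.piecewise z y = x, couplingWeight A p q y z

theorem couplingWeight_nonneg (hp : ∀ v, 0 ≤ p v) (hq : ∀ v, 0 ≤ q v) (y z : ι → Bool) :
    0 ≤ couplingWeight A p q y z :=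
  ite_nonneg (div_nonneg (mul_nonneg (hp y) (hq z)) (sum_nonneg fun v _ => hq v)) le_rfl

theorem sum_couplingWeight_right (hp : ∀ v, 0 ≤ p v)
    (hA : ∀ w, marginal p A w = marginal q A w) (y : ι → Bool) :
    ∑ z, couplingWeight A p q y z = p y := by
  have hdenom : ∀ z, (∀ j ∈ A, z j = y j) → marginal q A z = marginal q A y :=
    fun _ => marginal_congr
  calc ∑ z, couplingWeight A p q y z
      = ∑ z with ∀ j ∈ A, z j = y j, p y * q z / marginal q A y := by
        rw [sum_filter]
        refine sum_congr rfl fun z _ => ?_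
        unfold couplingWeight
        split_ifs with hz
        · rw [hdenom z hz]
        · rfl
    _ = p y * marginal q A y / marginal q A y := by
        rw [← sum_div, ← mul_sum]; rfl
    _ = p y := mul_div_cancel_of_le (hp y) ((le_marginal hp A y).trans_eq (hA y))

theorem sum_couplingWeight_left (hq : ∀ v, 0 ≤ q v)
    (hA : ∀ w, marginal p A w = marginal q A w) (z : ι → Bool) :
    ∑ y, couplingWeight A p q y z = q z := by
  calc ∑ y, couplingWeight A p q y z
      = ∑ y with ∀ j ∈ A, y j = z j, q z * p y / marginal q A z := by
        rw [sum_filter]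
        refine sum_congr rfl fun y _ => ?_
        unfold couplingWeight
        simp only [eq_comm (a := z _), mul_comm (p y)]
    _ = q z * marginal q A z / marginal q A z := by
        rw [← sum_div, ← mul_sum, ← hA]; rfl
    _ = q z := mul_div_cancel_of_le (hq z) (le_marginal hq A z)

theorem marginal_glue (A C : Finset ι) (p q : (ι → Bool) → ℝ) (E : Finset ι) (w : ι → Bool) :
    marginal (glue A C p q) E w =
      ∑ y, ∑ z with ∀ j ∈ E, C.piecewise z y j = w j, couplingWeight A p q y z := by
  rw [marginal]
  unfold glue
  rw [sum_comm]
  refine sum_congr rfl fun y _ => ?_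
  refine Eq.trans ?_ (sum_fiberwise_of_maps_to (g := fun z => C.piecewise z y)
    (t := univ.filter fun x => ∀ j ∈ E, x j = w j) (fun z hz => by simpa using hz) _)
  refine sum_congr rfl fun x hx => ?_
  rw [filter_filter]
  refine sum_congr (filter_congr fun z _ => ?_) fun _ _ => rfl
  simp only [mem_filter, mem_univ, true_and] at hx
  exact ⟨fun h => ⟨h ▸ hx, h⟩, fun h => h.2⟩

theorem marginal_glue_of_inter_subset (hp : ∀ v, 0 ≤ p v)
    (hA : ∀ w, marginal p A w = marginal q A w) {E : Finset ι} (hE : E ∩ C ⊆ A) (w : ι → Bool) :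
    marginal (glue A C p q) E w = marginal p E w := by
  have hcond : ∀ y z, (∀ j ∈ A, z j = y j) →
      ((∀ j ∈ E, C.piecewise z y j = w j) ↔ ∀ j ∈ E, y j = w j) := by
    refine fun y z hzy => forall₂_congr fun j hj => ?_
    by_cases hjC : j ∈ C
    · rw [piecewise_eq_of_mem _ _ _ hjC, hzy j (hE (mem_inter.2 ⟨hj, hjC⟩))]
    · rw [piecewise_eq_of_notMem _ _ _ hjC]
  rw [marginal_glue, marginal, sum_filter]
  refine sum_congr rfl fun y _ => ?_
  rw [sum_filter]
  split_ifs with hy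
  · rw [← sum_couplingWeight_right hp hA y]
    refine sum_congr rfl fun z _ => ?_
    by_cases hzy : ∀ j ∈ A, z j = y j
    · rw [if_pos ((hcond y z hzy).2 hy)]
    · simp [couplingWeight, hzy]
  · refine sum_eq_zero fun z _ => ?_
    by_cases hzy : ∀ j ∈ A, z j = y j
    · rw [if_neg (mt (hcond y z hzy).1 hy)]
    · simp [couplingWeight, hzy]

theorem marginal_glue_self (hq : ∀ v, 0 ≤ q v)
    (hA : ∀ w, marginal p A w = marginal q A w) (w : ι → Bool) :
    marginal (glue A C p q) C w = marginal q C w := by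
  have hcond : ∀ y z, (∀ j ∈ C, C.piecewise z y j = w j) ↔ ∀ j ∈ C, z j = w j :=
    fun y z => forall₂_congr fun j hj => by rw [piecewise_eq_of_mem _ _ _ hj]
  simp only [marginal_glue, hcond]
  rw [sum_comm, marginal]
  exact sum_congr rfl fun z _ => sum_couplingWeight_left hq hA z

theorem glue_mem_stdSimplex (hp : p ∈ stdSimplex ℝ (ι → Bool)) (hq : q ∈ stdSimplex ℝ (ι → Bool))
    (hA : ∀ w, marginal p A w = marginal q A w) : glue A C p q ∈ stdSimplex ℝ (ι → Bool) := by
  refine ⟨fun x => sum_nonneg fun y _ => sum_nonneg fun z _ =>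
    couplingWeight_nonneg hp.1 hq.1 y z, ?_⟩
  have := marginal_glue_of_inter_subset (C := C) hp.1 hA (E := ∅) (by simp) fun _ => false
  rwa [marginal_empty, marginal_empty, hp.2] at this

end Glue

section RunningIntersection

variable {ι τ : Type*} {T : SimpleGraph τ} {Q : τ → Finset ι}

def HasRunningIntersection (T : SimpleGraph τ) (Q : τ → Finset ι) : Prop :=
  ∀ v s s', v ∈ Q s → v ∈ Q s' → ∃ w : T.Walk s s', ∀ u ∈ w.support, v ∈ Q u

theorem HasRunningIntersection.inter_subset [DecidableEq ι] (hQ : HasRunningIntersection T Q)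
    {t₀ t₁ t : τ} (huniq : ∀ u, T.Adj t₀ u → u = t₁) (ht : t ≠ t₀) : Q t₀ ∩ Q t ⊆ Q t₁ := by
  intro v hv
  obtain ⟨hv₀, hvt⟩ := mem_inter.1 hv
  obtain ⟨w, hw⟩ := hQ v t₀ t hv₀ hvt
  obtain ⟨u, hadj, w', rfl⟩ := w.exists_eq_cons_of_ne (Ne.symm ht)
  exact huniq u hadj ▸ hw u (by simp)

theorem HasRunningIntersection.induce (hQ : HasRunningIntersection T Q) (hT : T.IsTree)
    {s : Set τ} (hs : (T.induce s).Connected) :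
    HasRunningIntersection (T.induce s) (fun t => Q t) := by
  classical
  intro v a b ha hb
  obtain ⟨w, hw⟩ := hQ v a b ha hb
  obtain ⟨p, hp⟩ := hs.exists_isPath a b
  have hpT : p.map (SimpleGraph.Embedding.induce s).toHom = w.bypass :=
    (hT.existsUnique_path _ _).unique (hp.map Subtype.val_injective) w.bypass_isPath
  have hsupp : p.support.map Subtype.val = w.bypass.support := by
    rw [← hpT]
    exact (SimpleGraph.Walk.support_map (SimpleGraph.Embedding.induce s).toHom p).symm
  refine ⟨p, fun u hu => hw u (w.support_bypass_subset_support ?_)⟩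
  exact hsupp ▸ List.mem_map_of_mem hu

theorem HasRunningIntersection.induction_on_leaf [DecidableEq ι]
    {motive : ∀ {τ : Type}, SimpleGraph τ → (τ → Finset ι) → Prop}
    (single : ∀ {τ : Type} (T : SimpleGraph τ) (Q : τ → Finset ι) (t₀ : τ), (∀ t, t = t₀) →
      motive T Q)
    (leaf : ∀ {τ : Type} (T : SimpleGraph τ) (Q : τ → Finset ι) (t₀ t₁ : τ), T.Adj t₀ t₁ →
      (∀ t, t ≠ t₀ → Q t₀ ∩ Q t ⊆ Q t₁) → motive (T.induce {t₀}ᶜ) (fun t => Q t) → motive T Q)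
    {τ : Type} [Finite τ] {T : SimpleGraph τ} {Q : τ → Finset ι} (hT : T.IsTree)
    (hQ : HasRunningIntersection T Q) : motive T Q := by
  induction τ using Finite.induction_subsingleton_or_nontrivial with
  | hbase τ =>
    obtain ⟨t₀⟩ := hT.connected.nonempty
    exact single T Q t₀ fun t => Subsingleton.elim t t₀
  | hstep τ ih =>
    classical
    have := Fintype.ofFinite τ
    obtain ⟨t₀, hdeg⟩ := hT.exists_vert_degree_one_of_nontrivial
    obtain ⟨t₁, hadj, huniq⟩ := SimpleGraph.degree_eq_one_iff_existsUnique_adj.1 hdeg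
    have hconn := hT.connected.induce_compl_singleton_of_degree_eq_one hdeg
    exact leaf T Q t₀ t₁ hadj (fun t ht => hQ.inter_subset huniq ht)
      (ih _ (Finite.card_subtype_lt (x := t₀) (by simp)) ⟨hconn, hT.isAcyclic.induce _⟩
        (hQ.induce hT hconn))

theorem HasRunningIntersection.exists_subset_of_pairwise [DecidableEq ι] {τ : Type} [Finite τ]
    {T : SimpleGraph τ} {Q : τ → Finset ι} (hT : T.IsTree) (hQ : HasRunningIntersection T Q)
    (W : Finset ι) (hW : ∀ u ∈ W, ∀ v ∈ W, ∃ t, u ∈ Q t ∧ v ∈ Q t) : ∃ t, W ⊆ Q t := by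
  revert W
  refine hQ.induction_on_leaf (motive := fun {τ} T Q => ∀ W : Finset ι,
    (∀ u ∈ W, ∀ v ∈ W, ∃ t, u ∈ Q t ∧ v ∈ Q t) → ∃ t, W ⊆ Q t) ?_ ?_ hT
  · intro τ T Q t₀ ht₀ W hW
    refine ⟨t₀, fun u hu => ?_⟩
    obtain ⟨t, hut, -⟩ := hW u hu u hu
    rwa [← ht₀ t]
  · intro τ T Q t₀ t₁ hadj hsep ih W hW
    by_cases hW₀ : W ⊆ Q t₀
    · exact ⟨t₀, hW₀⟩
    obtain ⟨x, hxW, hx₀⟩ := not_subset.1 hW₀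
    have hmove : ∀ u ∈ W, u ∈ Q t₀ → u ∈ Q t₁ := by
      intro u hu hu₀
      obtain ⟨t, hut, hxt⟩ := hW u hu x hxW
      exact hsep t (by rintro rfl; exact hx₀ hxt) (mem_inter.2 ⟨hu₀, hut⟩)
    obtain ⟨t, ht⟩ := ih W fun u hu v hv => by
      obtain ⟨t, hut, hvt⟩ := hW u hu v hv
      by_cases ht : t = t₀
      · subst ht
        exact ⟨⟨t₁, hadj.ne.symm⟩, hmove u hu hut, hmove v hv hvt⟩
      · exact ⟨⟨t, ht⟩, hut, hvt⟩
    exact ⟨t, ht⟩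

end RunningIntersection

theorem HasRunningIntersection.exists_marginal_eq {ι : Type*} [Fintype ι] [DecidableEq ι]
    {τ : Type} [Finite τ] {T : SimpleGraph τ} {Q : τ → Finset ι} (hT : T.IsTree)
    (hQ : HasRunningIntersection T Q) (p : τ → (ι → Bool) → ℝ)
    (hp : ∀ t, p t ∈ stdSimplex ℝ (ι → Bool))
    (hcons : ∀ t t', T.Adj t t' → ∀ w,
      marginal (p t) (Q t ∩ Q t') w = marginal (p t') (Q t ∩ Q t') w) :
    ∃ μ ∈ stdSimplex ℝ (ι → Bool), ∀ t w, marginal μ (Q t) w = marginal (p t) (Q t) w := by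
  revert p
  refine hQ.induction_on_leaf (motive := fun {τ} T Q => ∀ p : τ → (ι → Bool) → ℝ,
    (∀ t, p t ∈ stdSimplex ℝ (ι → Bool)) →
    (∀ t t', T.Adj t t' → ∀ w, marginal (p t) (Q t ∩ Q t') w = marginal (p t') (Q t ∩ Q t') w) →
    ∃ μ ∈ stdSimplex ℝ (ι → Bool), ∀ t w, marginal μ (Q t) w = marginal (p t) (Q t) w) ?_ ?_ hT
  · intro τ T Q t₀ ht₀ p hp _
    exact ⟨p t₀, hp t₀, fun t w => by rw [ht₀ t]⟩
  · intro τ T Q t₀ t₁ hadj hsep ih p hp hcons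
    obtain ⟨μ, hμ, hμp⟩ := ih (fun t => p t) (fun t => hp t) fun t t' h => hcons t t' h
    have hA : ∀ w, marginal μ (Q t₀ ∩ Q t₁) w = marginal (p t₀) (Q t₀ ∩ Q t₁) w := fun w =>
      (marginal_eq_of_subset inter_subset_right (hμp ⟨t₁, hadj.ne.symm⟩) w).trans
        (hcons t₀ t₁ hadj w).symm
    refine ⟨glue (Q t₀ ∩ Q t₁) (Q t₀) μ (p t₀), glue_mem_stdSimplex hμ (hp t₀) hA, fun t w => ?_⟩
    by_cases ht : t = t₀
    · subst ht
      exact marginal_glue_self (hp t).1 hA w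
    · have hE : Q t ∩ Q t₀ ⊆ Q t₀ ∩ Q t₁ := fun j hj => by
        rw [inter_comm] at hj
        exact mem_inter.2 ⟨(mem_inter.1 hj).1, hsep t ht hj⟩
      rw [marginal_glue_of_inter_subset hμ.1 hA hE w]
      exact hμp ⟨t, ht⟩ w

theorem IsTreeDecomp.hasRunningIntersection {V τ : Type} {H : SimpleGraph V}
    {T : SimpleGraph τ} {Q : τ → Finset V} (hTD : IsTreeDecomp H T Q) :
    HasRunningIntersection T Q := by
  intro v s s' hs hs'
  obtain ⟨w⟩ := (hTD.2.1 v).preconnected ⟨s, hs⟩ ⟨s', hs'⟩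
  refine ⟨w.map (SimpleGraph.Embedding.induce _).toHom, fun u hu => ?_⟩
  obtain ⟨a, -, rfl⟩ := List.mem_map.1 ((SimpleGraph.Walk.support_map _ _) ▸ hu)
  exact a.2

theorem IsTreeDecomp.exists_subset_of_isClique {V τ : Type} [Finite τ] [DecidableEq V]
    {H : SimpleGraph V} {T : SimpleGraph τ} {Q : τ → Finset V} (hTD : IsTreeDecomp H T Q)
    {W : Finset V} (hW : H.IsClique (W : Set V)) : ∃ t, W ⊆ Q t :=
  hTD.hasRunningIntersection.exists_subset_of_pairwise hTD.1 W fun u hu v hv => by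
    rcases eq_or_ne u v with rfl | huv
    · obtain ⟨⟨t, ht⟩⟩ := (hTD.2.1 u).nonempty
      exact ⟨t, ht, ht⟩
    · exact hTD.2.2 u v (hW hu hv huv)

theorem isClique_interGraph {n m : ℕ} (K : Fin m → Finset (Fin n)) (i : Fin m) :
    (interGraph K).IsClique (K i : Set (Fin n)) :=
  fun _ hu _ hv huv => ⟨huv, i, hu, hv⟩

theorem exists_fin_enum_support {α : Type*} [Fintype α] (μ : α → ℝ) :
    ∃ (k : ℕ) (x : Fin k → α), (∀ ℓ, μ (x ℓ) ≠ 0) ∧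
      ∀ g : α → ℝ, (∀ a, μ a = 0 → g a = 0) → ∑ ℓ, g (x ℓ) = ∑ a, g a := by
  classical
  set D := univ.filter fun a => μ a ≠ 0
  refine ⟨D.card, fun ℓ => D.equivFin.symm ℓ, fun ℓ => (mem_filter.1 (D.equivFin.symm ℓ).2).2,
    fun g hg => ?_⟩
  rw [Equiv.sum_comp D.equivFin.symm (fun a : D => g a), sum_coe_sort D g]
  exact sum_filter_of_ne fun a _ ha h0 => ha (hg a h0)

namespace LPGBFeas

variable {n m : ℕ} {τ : Type} {K : Fin m → Finset (Fin n)}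
  {Sc : ∀ i : Fin m, Set ({j // j ∈ K i} → Bool)} {T : SimpleGraph τ} {Q : τ → Finset (Fin n)}
  {X : Finset (Fin n) × Finset (Fin n) → ℝ} {lam : τ → (Fin n → Bool) → ℝ}

theorem mem_stdSimplex (h : LPGBFeas K Sc T Q X lam) (t : τ) :
    lam t ∈ stdSimplex ℝ (Fin n → Bool) :=
  ⟨h.2.1 t, h.2.2.1 t⟩

theorem eq_marginal (h : LPGBFeas K Sc T Q X lam) {t : τ} {YN : Finset (Fin n) × Finset (Fin n)}
    (hYN : YN ∈ Omega T Q t) :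
    X YN = marginal (lam t) (YN.1 ∪ YN.2) (fun j => decide (j ∈ YN.1)) :=
  (h.2.2.2 t YN hYN).trans (sum_mul_prod_bval_eq_marginal _ hYN.1)

theorem marginal_inter_eq (h : LPGBFeas K Sc T Q X lam) {t t' : τ} (hadj : T.Adj t t')
    (w : Fin n → Bool) :
    marginal (lam t) (Q t ∩ Q t') w = marginal (lam t') (Q t ∩ Q t') w := by
  set Y := (Q t ∩ Q t').filter fun j => w j = true
  set N := (Q t ∩ Q t').filter fun j => ¬w j = true
  have hYN : Disjoint Y N := disjoint_filter_filter_not _ _ _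
  have hun : Y ∪ N = Q t ∩ Q t' := filter_union_filter_not_eq _ _
  have hw : ∀ j ∈ Q t ∩ Q t', w j = decide (j ∈ Y) := fun j hj => by
    by_cases hwj : w j = true <;> simp [Y, hj, hwj]
  have hmem : (Y, N) ∈ Omega T Q t :=
    ⟨hYN, hun ▸ inter_subset_left, Or.inr ⟨t', hadj, hun⟩⟩
  have hmem' : (Y, N) ∈ Omega T Q t' :=
    ⟨hYN, hun ▸ inter_subset_right, Or.inr ⟨t, hadj.symm, hun.trans (inter_comm _ _)⟩⟩
  have h₁ := h.eq_marginal hmem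
  have h₂ := h.eq_marginal hmem'
  simp only [hun] at h₁ h₂
  rw [marginal_congr hw, marginal_congr hw, ← h₁, ← h₂]

theorem exists_distribution [Finite τ] (hTD : IsTreeDecomp (interGraph K) T Q)
    (h : LPGBFeas K Sc T Q X lam) :
    ∃ μ ∈ stdSimplex ℝ (Fin n → Bool), (∀ x, μ x ≠ 0 → GBFeas K Sc x) ∧
      ∀ t, ∀ YN ∈ Omega T Q t,
        X YN = ∑ v, μ v * (∏ j ∈ YN.1, bval (v j)) * ∏ j ∈ YN.2, (1 - bval (v j)) := by
  obtain ⟨μ, hμ, hμlam⟩ := hTD.hasRunningIntersection.exists_marginal_eq hTD.1 lam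
    h.mem_stdSimplex fun t t' => h.marginal_inter_eq
  refine ⟨μ, hμ, fun x hx i => ?_, fun t YN hYN => ?_⟩
  · obtain ⟨t, hKt⟩ := hTD.exists_subset_of_isClique (isClique_interGraph K i)
    have hpos : marginal (lam t) (Q t) x ≠ 0 := by
      rw [← hμlam]
      exact ((lt_of_le_of_ne (hμ.1 x) (Ne.symm hx)).trans_le (le_marginal hμ.1 _ x)).ne'
    obtain ⟨v, hv, hvne⟩ := exists_ne_zero_of_sum_ne_zero hpos
    have hvF : v ∈ Ffeas K Sc Q t := by_contra fun hc => hvne (h.1 t v hc)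
    simp only [mem_filter, mem_univ, true_and] at hv
    have hxv : restr x (K i) = restr v (K i) := funext fun j => (hv j (hKt j.2)).symm
    exact hxv ▸ hvF.2 i hKt
  · rw [h.eq_marginal hYN, sum_mul_prod_bval_eq_marginal _ hYN.1]
    exact marginal_eq_of_subset hYN.2.1 (fun w => (hμlam t w).symm) _

theorem le_cost [Finite τ] (hTD : IsTreeDecomp (interGraph K) T Q)
    (h : LPGBFeas K Sc T Q X lam) (c : Fin n → ℝ) {r : ℝ}
    (hr : ∀ x, GBFeas K Sc x → r ≤ ∑ j, c j * bval (x j)) :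
    r ≤ ∑ j, c j * X ({j}, ∅) := by
  obtain ⟨μ, hμ, hμfeas, hμX⟩ := h.exists_distribution hTD
  have hXj : ∀ j, X ({j}, ∅) = ∑ v, μ v * bval (v j) := by
    intro j
    obtain ⟨⟨t, ht⟩⟩ := (hTD.2.1 j).nonempty
    have hmem : (({j}, ∅) : Finset (Fin n) × Finset (Fin n)) ∈ Omega T Q t :=
      ⟨disjoint_empty_right _, by simpa using ht, Or.inl ⟨by simp, rfl⟩⟩
    simpa using hμX t _ hmem
  calc r = ∑ v, μ v * r := by rw [← sum_mul, hμ.2, one_mul]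
    _ ≤ ∑ v, μ v * ∑ j, c j * bval (v j) := sum_le_sum fun v _ => by
        by_cases hv : μ v = 0
        · simp [hv]
        · exact mul_le_mul_of_nonneg_left (hr v (hμfeas v hv)) (hμ.1 v)
    _ = ∑ j, c j * X ({j}, ∅) := by
        simp only [hXj, mul_sum]
        rw [sum_comm]
        exact sum_congr rfl fun j _ => sum_congr rfl fun v _ => by ring

end LPGBFeas

theorem lpgbFeas_of_gbFeas {n m : ℕ} {τ : Type} {K : Fin m → Finset (Fin n)}
    {Sc : ∀ i : Fin m, Set ({j // j ∈ K i} → Bool)} (T : SimpleGraph τ) (Q : τ → Finset (Fin n))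
    {x : Fin n → Bool} (hx : GBFeas K Sc x) :
    LPGBFeas K Sc T Q (fun YN => (∏ j ∈ YN.1, bval (x j)) * ∏ j ∈ YN.2, (1 - bval (x j)))
      (fun t v => if v = (Q t).piecewise x (fun _ => false) then 1 else 0) := by
  refine ⟨fun t v hv => if_neg ?_, fun t v => ite_nonneg zero_le_one le_rfl,
    fun t => by simp, fun t YN hYN => ?_⟩
  · rintro rfl
    refine hv ⟨fun j hj => piecewise_eq_of_notMem _ _ _ hj, fun i hKi => ?_⟩
    have : restr ((Q t).piecewise x fun _ => false) (K i) = restr x (K i) :=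
      funext fun j => piecewise_eq_of_mem _ _ _ (hKi j.2)
    exact this ▸ hx i
  · have hx' : ∀ j ∈ YN.1 ∪ YN.2, (Q t).piecewise x (fun _ => false) j = x j :=
      fun j hj => piecewise_eq_of_mem _ _ _ (hYN.2.1 hj)
    simp only [ite_mul, one_mul, zero_mul, sum_ite_eq', mem_univ, if_true]
    rw [prod_congr rfl fun j hj => congrArg bval (hx' j (mem_union_left _ hj)),
      prod_congr rfl fun j hj => congrArg (1 - bval ·) (hx' j (mem_union_right _ hj))]

/-- Theorem: LP-GB is an exact formulation. Any feasible solution of LP-GB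
decomposes as a convex combination of GB-feasible 0/1 vectors; consequently, when the GB
instance is feasible, the optimum of GB equals the optimum of LP-GB, and the latter is
attained. -/
theorem lpgb_exact
    {n m : ℕ} {τ : Type} [Fintype τ] (K : Fin m → Finset (Fin n))
    (Sc : ∀ i : Fin m, Set ({j // j ∈ K i} → Bool))
    (T : SimpleGraph τ) (Q : τ → Finset (Fin n))
    (hTD : IsTreeDecomp (interGraph K) T Q)
    (X : Finset (Fin n) × Finset (Fin n) → ℝ) (lam : τ → (Fin n → Bool) → ℝ)
    (hfeas : LPGBFeas K Sc T Q X lam) :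
    (∃ (k : ℕ) (μ : Fin k → ℝ) (x : Fin k → Fin n → Bool),
      1 ≤ k ∧
      (∀ ℓ, 0 ≤ μ ℓ) ∧
      (∑ ℓ, μ ℓ) = 1 ∧
      (∀ ℓ, GBFeas K Sc (x ℓ)) ∧
      (∀ t, ∀ YN ∈ Omega T Q t,
        X YN = ∑ ℓ, μ ℓ * (∏ j ∈ YN.1, bval (x ℓ j)) * (∏ j ∈ YN.2, (1 - bval (x ℓ j))))) ∧
    ((∃ x0 : Fin n → Bool, GBFeas K Sc x0) → ∀ c : Fin n → ℝ, ∃ r : ℝ,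
      IsLeast {val : ℝ | ∃ x : Fin n → Bool, GBFeas K Sc x ∧ val = ∑ j, c j * bval (x j)} r ∧
      IsLeast {val : ℝ | ∃ (X' : Finset (Fin n) × Finset (Fin n) → ℝ)
          (lam' : τ → (Fin n → Bool) → ℝ),
        LPGBFeas K Sc T Q X' lam' ∧ val = ∑ j, c j * X' ({j}, ∅)} r) := by
  classical
  refine ⟨?_, fun ⟨x₀, hx₀⟩ c => ?_⟩
  · obtain ⟨μ, hμ, hμfeas, hμX⟩ := hfeas.exists_distribution hTD
    obtain ⟨k, x, hx, hsum⟩ := exists_fin_enum_support μ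
    have hμsum : ∑ ℓ, μ (x ℓ) = 1 := (hsum μ fun _ h => h).trans hμ.2
    refine ⟨k, fun ℓ => μ (x ℓ), x, Nat.one_le_iff_ne_zero.2 ?_, fun ℓ => hμ.1 _, hμsum,
      fun ℓ => hμfeas _ (hx ℓ), fun t YN hYN => ?_⟩
    · rintro rfl
      simp at hμsum
    · rw [hμX t YN hYN]
      exact (hsum (fun v => μ v * (∏ j ∈ YN.1, bval (v j)) * ∏ j ∈ YN.2, (1 - bval (v j)))
        fun a ha => by simp [ha]).symm
  · obtain ⟨x, hx, hmin⟩ := exists_min_image (univ.filter (GBFeas K Sc))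
      (fun x => ∑ j, c j * bval (x j)) ⟨x₀, by simpa using hx₀⟩
    have hxmin : ∀ y, GBFeas K Sc y → ∑ j, c j * bval (x j) ≤ ∑ j, c j * bval (y j) :=
      fun y hy => hmin y (by simpa using hy)
    rw [mem_filter] at hx
    refine ⟨_, ⟨⟨x, hx.2, rfl⟩, ?_⟩, ⟨_, _, lpgbFeas_of_gbFeas T Q hx.2, by simp⟩, ?_⟩
    · rintro _ ⟨y, hy, rfl⟩
      exact hxmin y hy
    · rintro _ ⟨X', lam', hfeas', rfl⟩
      exact hfeas'.le_cost hTD c hxmin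
end

section
/- Let q ≥ 0 and π ≥ 1 be integers, let 0 < γ < 1 and set δ = 1 − (1 − γ)^π. Suppose s, x ∈ ℝ^q satisfy 0 ≤ s_j ≤ x_j ≤ min(s_j + γ, 1) for every 1 ≤ j ≤ q, and let α ∈ ℕ^q with Σ_{j=1}^q α_j ≤ π. Then Π_{j=1}^q s_j^{α_j} ≤ Π_{j=1}^q x_j^{α_j} ≤ Π_{j=1}^q s_j^{α_j} + δ. -/
/-! If `x` exceeds `s` by at most `γ` coordinatewise inside `[0, 1]`, the relation
`x - s ≤ 1 - (1 - γ)` survives multiplication: whenever `0 ≤ bᵢ ≤ aᵢ ≤ 1`, `0 ≤ cᵢ ≤ 1` and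
`aᵢ - bᵢ ≤ 1 - cᵢ`, also `∏ aᵢ - ∏ bᵢ ≤ 1 - ∏ cᵢ`. Viewing `x ^ α` as a product of
`∑ αⱼ ≤ π` factors gives the error `1 - (1 - γ) ^ ∑ αⱼ ≤ 1 - (1 - γ) ^ π`. -/

section

variable {R : Type*} [CommRing R] [LinearOrder R] [IsStrictOrderedRing R]

theorem mul_sub_mul_le_one_sub_mul {a₁ b₁ c₁ a₂ b₂ c₂ : R}
    (hb₁ : 0 ≤ b₁) (hba₁ : b₁ ≤ a₁) (ha₁ : a₁ ≤ 1) (ha₂ : a₂ ≤ 1) (hc₂ : 0 ≤ c₂) (hc₂' : c₂ ≤ 1)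
    (h₁ : a₁ - b₁ ≤ 1 - c₁) (h₂ : a₂ - b₂ ≤ 1 - c₂) :
    a₁ * a₂ - b₁ * b₂ ≤ 1 - c₁ * c₂ := by
  -- `a₁ a₂ - b₁ b₂ = (a₁ - b₁) a₂ + b₁ (a₂ - b₂) ≤ (a₁ - b₁) + b₁ (1 - c₂) ≤ 1 - c₁ c₂`
  nlinarith [mul_nonneg (sub_nonneg.2 hba₁) (sub_nonneg.2 ha₂),
    mul_nonneg hb₁ (sub_nonneg.2 h₂), mul_nonneg (sub_nonneg.2 h₁) hc₂,
    mul_nonneg (sub_nonneg.2 ha₁) (sub_nonneg.2 hc₂')]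

theorem Finset.prod_sub_prod_le_one_sub_prod {ι : Type*} (t : Finset ι) {a b c : ι → R}
    (hb : ∀ i ∈ t, 0 ≤ b i) (hba : ∀ i ∈ t, b i ≤ a i) (ha : ∀ i ∈ t, a i ≤ 1)
    (hc : ∀ i ∈ t, 0 ≤ c i) (hc' : ∀ i ∈ t, c i ≤ 1) (h : ∀ i ∈ t, a i - b i ≤ 1 - c i) :
    ∏ i ∈ t, a i - ∏ i ∈ t, b i ≤ 1 - ∏ i ∈ t, c i := by
  induction t using Finset.cons_induction with
  | empty => simp
  | cons j t hj ih =>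
    simp only [Finset.forall_mem_cons] at hb hba ha hc hc' h
    simp only [Finset.prod_cons]
    exact mul_sub_mul_le_one_sub_mul hb.1 hba.1 ha.1
      (Finset.prod_le_one (fun i hi => (hb.2 i hi).trans (hba.2 i hi)) ha.2)
      (Finset.prod_nonneg hc.2) (Finset.prod_le_one hc.2 hc'.2) h.1
      (ih hb.2 hba.2 ha.2 hc.2 hc'.2 h.2)

theorem pow_sub_pow_le_one_sub_pow {a b c : R} (hb : 0 ≤ b) (hba : b ≤ a) (ha : a ≤ 1)
    (hc : 0 ≤ c) (hc' : c ≤ 1) (h : a - b ≤ 1 - c) (n : ℕ) :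
    a ^ n - b ^ n ≤ 1 - c ^ n := by
  simpa using (Finset.range n).prod_sub_prod_le_one_sub_prod (a := fun _ => a) (b := fun _ => b)
    (c := fun _ => c) (fun _ _ => hb) (fun _ _ => hba) (fun _ _ => ha) (fun _ _ => hc)
    (fun _ _ => hc') (fun _ _ => h)

end

theorem monomial_approximation_general (q π : ℕ) (γ δ : ℝ)
    (hγ0 : 0 < γ) (hγ1 : γ < 1) (hδ : δ = 1 - (1 - γ) ^ π)
    (s x : Fin q → ℝ) (h : ∀ j, 0 ≤ s j ∧ s j ≤ x j ∧ x j ≤ min (s j + γ) 1)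
    (α : Fin q → ℕ) (hα : (∑ j, α j) ≤ π) :
    (∏ j, s j ^ α j) ≤ (∏ j, x j ^ α j) ∧
    (∏ j, x j ^ α j) ≤ (∏ j, s j ^ α j) + δ := by
  have hs (j) : 0 ≤ s j := (h j).1
  have hsx (j) : s j ≤ x j := (h j).2.1
  have hx (j) : x j ≤ 1 := (h j).2.2.trans (min_le_right _ _)
  have hgap (j) : x j - s j ≤ 1 - (1 - γ) := by linarith [(h j).2.2.trans (min_le_left _ _)]
  have hpow (j) : x j ^ α j - s j ^ α j ≤ 1 - (1 - γ) ^ α j :=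
    pow_sub_pow_le_one_sub_pow (hs j) (hsx j) (hx j) (by linarith) (by linarith) (hgap j) (α j)
  refine ⟨Finset.prod_le_prod (fun j _ => pow_nonneg (hs j) _)
    (fun j _ => pow_le_pow_left₀ (hs j) (hsx j) _), ?_⟩
  have hprod := Finset.univ.prod_sub_prod_le_one_sub_prod
    (fun j _ => pow_nonneg (hs j) (α j)) (fun j _ => pow_le_pow_left₀ (hs j) (hsx j) _)
    (fun j _ => pow_le_one₀ ((hs j).trans (hsx j)) (hx j))
    (fun j _ => pow_nonneg (sub_nonneg.2 hγ1.le) (α j))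
    (fun j _ => pow_le_one₀ (sub_nonneg.2 hγ1.le) (by linarith)) (fun j _ => hpow j)
  rw [Finset.prod_pow_eq_pow_sum] at hprod
  have hmono : (1 - γ) ^ π ≤ (1 - γ) ^ ∑ j, α j :=
    pow_le_pow_of_le_one (by linarith) (by linarith) hα
  linarith

/-- monomial approximation inequality. If `0 ≤ s j ≤ x j ≤ min (s j + γ) 1`
for all `j`, `0 < γ < 1`, `δ = 1 - (1 - γ) ^ π` with `π ≥ 1`, and `∑ α j ≤ π`, then
`∏ s j ^ α j ≤ ∏ x j ^ α j ≤ ∏ s j ^ α j + δ`. -/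
theorem monomial_approximation (q π : ℕ) (hπ : 1 ≤ π) (γ δ : ℝ)
    (hγ0 : 0 < γ) (hγ1 : γ < 1) (hδ : δ = 1 - (1 - γ) ^ π)
    (s x : Fin q → ℝ) (h : ∀ j, 0 ≤ s j ∧ s j ≤ x j ∧ x j ≤ min (s j + γ) 1)
    (α : Fin q → ℕ) (hα : (∑ j, α j) ≤ π) :
    (∏ j, s j ^ α j) ≤ (∏ j, x j ^ α j) ∧
    (∏ j, x j ^ α j) ≤ (∏ j, s j ^ α j) + δ :=
  monomial_approximation_general q π γ δ hγ0 hγ1 hδ s x h α hα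
end
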